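/- arXiv:1508.05157 — 3 statements merged into one kernel-verified Lean document; each statement's English description precedes it below -/
import Mathlib

section
/- For all n ≥ 1, ∑_{σ ∈ B_n} q^{ℓ_B(σ)} ∏_{i ∈ Rlmin_B(σ)} t_i = ∏_{i=1}^{n} ([2i]_q − 1 + t_i). -/
open Finset

open scoped Classical

noncomputable section

variable {n : ℕ}

/-- `u <_F v` : strictly below in the forest order. -/
def strictR (r : Fin n → Fin n → Prop) (u v : Fin n) : Prop := r u v ∧ u ≠ v

/-- A naturally indexed plane forest structure on `Fin n`: a partial order whose
principal up-sets are chains (roots maximal), with natural indexing. -/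
def IsForest (r : Fin n → Fin n → Prop) : Prop :=
  IsPartialOrder (Fin n) r ∧ (∀ v u u', r v u → r v u' → r u u' ∨ r u' u) ∧
    ∀ u v, r u v → u ≤ v

/-- `h_v`: size of the principal order ideal generated by `v`. -/
def hook (r : Fin n → Fin n → Prop) (v : Fin n) : ℕ :=
  (univ.filter fun u => r u v).card

/-- q-integer `[m] = 1 + q + ... + q^(m-1)`. -/
def qInt {R : Type*} [CommRing R] (q : R) (m : ℕ) : R := ∑ i ∈ Finset.range m, q ^ i

/-- inversions of an (unsigned) labeling. -/
def invF (r : Fin n → Fin n → Prop) (w : Equiv.Perm (Fin n)) : ℕ :=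
  (univ.filter fun uv : Fin n × Fin n => strictR r uv.1 uv.2 ∧ w uv.2 < w uv.1).card

/-- a natural (order-preserving) labeling. -/
def NaturalL (r : Fin n → Fin n → Prop) (w : Equiv.Perm (Fin n)) : Prop :=
  ∀ u v, strictR r u v → w u < w v

/-- bottom-to-top maximum positions. -/
def BtmaxF (r : Fin n → Fin n → Prop) (w : Equiv.Perm (Fin n)) : Finset (Fin n) :=
  univ.filter fun v => ∀ u, strictR r u v → w u < w v

/-- label (in 1..n, with convention n+1 for roots) of the parent of `v`;
for a naturally indexed forest the parent of `v` is the minimal-index vertex strictly above `v`. -/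
def parentW (r : Fin n → Fin n → Prop) (w : Equiv.Perm (Fin n)) (v : Fin n) : ℕ :=
  if h : (univ.filter fun u => strictR r v u).Nonempty then
    (w ((univ.filter fun u => strictR r v u).min' h) : ℕ) + 1
  else n + 1

/-- major index: sum of hooks over descents. -/
def majF (r : Fin n → Fin n → Prop) (w : Equiv.Perm (Fin n)) : ℕ :=
  ∑ v ∈ univ.filter (fun v => parentW r w v < (w v : ℕ) + 1), hook r v

/-- M-code of a labeled forest. -/
def mcodeF (r : Fin n → Fin n → Prop) (w : Equiv.Perm (Fin n)) (i : Fin n) : ℕ :=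
  if (w i : ℕ) + 1 < parentW r w i then
    (univ.filter fun u => strictR r u i ∧ (w i : ℕ) + 1 ≤ (w u : ℕ) + 1 ∧
      (w u : ℕ) + 1 ≤ parentW r w i).card
  else
    (univ.filter fun u => strictR r u i ∧ ¬(parentW r w i ≤ (w u : ℕ) + 1 ∧
      (w u : ℕ) + 1 ≤ (w i : ℕ) + 1)).card

/-- cyclic bottom-to-top maxima. -/
def CbtmaxF (r : Fin n → Fin n → Prop) (w : Equiv.Perm (Fin n)) : Finset (Fin n) :=
  univ.filter fun v =>
    if (w v : ℕ) + 1 < parentW r w v then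
      ∀ u, strictR r u v → ¬((w v : ℕ) + 1 ≤ (w u : ℕ) + 1 ∧ (w u : ℕ) + 1 ≤ parentW r w v)
    else
      ∀ u, strictR r u v → (parentW r w v ≤ (w u : ℕ) + 1 ∧ (w u : ℕ) + 1 ≤ (w v : ℕ) + 1)

/-! ### Signed labelings, encoded as a permutation together with a sign function.
`wVal (σ, ε)` is the corresponding signed labeling `V(F) → {±1, …, ±n}`;
this is a bijective encoding of the set `W_B(F)` of signed labelings. -/

def wVal (p : Equiv.Perm (Fin n) × (Fin n → Bool)) (v : Fin n) : ℤ :=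
  (if p.2 v then -1 else 1) * ((p.1 v : ℤ) + 1)

/-- number of negative labels. -/
def n1F (w : Fin n → ℤ) : ℕ := (univ.filter fun v => w v < 0).card

/-- inversions of a signed labeling. -/
def invSF (r : Fin n → Fin n → Prop) (w : Fin n → ℤ) : ℕ :=
  (univ.filter fun uv : Fin n × Fin n => strictR r uv.1 uv.2 ∧ w uv.2 < w uv.1).card

def n2F (r : Fin n → Fin n → Prop) (w : Fin n → ℤ) : ℕ :=
  (univ.filter fun uv : Fin n × Fin n => strictR r uv.1 uv.2 ∧ w uv.1 + w uv.2 < 0).card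

def invBF (r : Fin n → Fin n → Prop) (w : Fin n → ℤ) : ℕ := invSF r w + n1F w + n2F r w

def invDF (r : Fin n → Fin n → Prop) (w : Fin n → ℤ) : ℕ := invSF r w + n2F r w

/-- the A-code of a signed labeled forest. -/
def acodeF (r : Fin n → Fin n → Prop) (w : Fin n → ℤ) (i : Fin n) : ℕ :=
  (univ.filter fun u => strictR r u i ∧ w i < w u).card +
  (univ.filter fun u => strictR r u i ∧ w u + w i < 0).card +
  (if w i < 0 then 1 else 0)

/-- signed bottom-to-top maximum positions. -/
def BtmaxBF (r : Fin n → Fin n → Prop) (w : Fin n → ℤ) : Finset (Fin n) :=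
  univ.filter fun v => 0 < w v ∧ ∀ u, strictR r u v → |w u| < w v

def leafF (r : Fin n → Fin n → Prop) (v : Fin n) : Prop := ∀ u, ¬ strictR r u v

/-- type D bottom-to-top maximum positions. -/
def BtmaxDF (r : Fin n → Fin n → Prop) (w : Fin n → ℤ) : Finset (Fin n) :=
  univ.filter fun v => ¬ leafF r v ∧ 0 < w v ∧ ∀ u, strictR r u v → |w u| < w v

/-! ### The map φ: one sorting step towards a natural labeling, recording the A-code. -/

def stepA (r : Fin n → Fin n → Prop) (i : Fin n) (w : Fin n → ℤ) : Fin n → ℤ :=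
  let A := (univ.filter fun u => r u i).image fun u => (w u).natAbs
  let M := A.max.getD 0
  let l := (A.erase M).sort (· ≤ ·)
  fun u =>
    if u = i then (M : ℤ)
    else if strictR r u i then
      (if w u < 0 then -1 else 1) *
        (l.getD ((univ.filter fun u' => strictR r u' i ∧ (w u').natAbs < (w u).natAbs).card) 0)
    else w u

/-- processing vertices `v_n, v_{n-1}, …, v_1` yields the natural labeling `w'`. -/
def sortA (r : Fin n → Fin n → Prop) (w : Fin n → ℤ) : Fin n → ℤ :=
  ((List.finRange n).reverse).foldl (fun w i => stepA r i w) w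

/-! ### The sorting algorithm for the sorting index. -/

/-- standardized label of `x` in the subtree rooted at `u`. -/
def stdVal (r : Fin n → Fin n → Prop) (u : Fin n) (w : Fin n → ℤ) (x : Fin n) : ℤ :=
  (if w x < 0 then -1 else 1) * (((univ.filter fun y => r y u ∧ |w y| < |w x|).card : ℤ) + 1)

/-- one step of the forest sorting algorithm (placing value `i+1`); the state is
(current labeling, recorded B-code, running total). -/
def sortStepB (r : Fin n → Fin n → Prop) (i : Fin n)
    (s : (Fin n → ℤ) × (Fin n → ℤ) × ℤ) : (Fin n → ℤ) × (Fin n → ℤ) × ℤ :=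
  let w := s.1
  let v := ((univ.filter fun x => |w x| = (i : ℤ) + 1).max).getD i
  let u := ((univ.filter fun x => r v x ∧ |w x| ≤ (i : ℤ) + 1).max).getD i
  let amt : ℤ := |stdVal r u w v| - stdVal r u w u - (if w u < 0 then 1 else 0)
  let w' := if 0 < w v then Function.update (Function.update w u (w v)) v (w u)
            else Function.update (Function.update w u (-(w v))) v (-(w u))
  (w', Function.update s.2.1 u amt, s.2.2 + amt)

def runB (r : Fin n → Fin n → Prop) (w : Fin n → ℤ) : (Fin n → ℤ) × (Fin n → ℤ) × ℤ :=
  ((List.finRange n).reverse).foldl (fun s i => sortStepB r i s) (w, fun _ => (0 : ℤ), 0)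

/-- the natural labeling produced by the sorting algorithm. -/
def sortedB (r : Fin n → Fin n → Prop) (w : Fin n → ℤ) : Fin n → ℤ := (runB r w).1

/-- B-code: `b_i` = amount contributed at the step in which `u = v_i`. -/
def bcodeB (r : Fin n → Fin n → Prop) (w : Fin n → ℤ) : Fin n → ℤ := (runB r w).2.1

/-- the sorting index of a signed labeled forest. -/
def sorBF (r : Fin n → Fin n → Prop) (w : Fin n → ℤ) : ℤ := (runB r w).2.2

/-! ### Cycles of signed permutations. -/

/-- the extension of `g : Fin n → ℤ` (a signed permutation written in one-line notation,
`g i` = image of `i+1`) to `{±1, …, ±n} ⊆ ℤ`. -/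
def extB (g : Fin n → ℤ) : ℤ → ℤ := fun k =>
  if h : 0 < k ∧ k ≤ (n : ℤ) then g ⟨k.toNat - 1, by omega⟩
  else if h' : -(n : ℤ) ≤ k ∧ k < 0 then -g ⟨(-k).toNat - 1, by omega⟩
  else k

/-- absolute values of the minimal-in-absolute-value elements of balanced cycles. -/
def CycBperm (g : Fin n → ℤ) : Finset ℕ :=
  (Finset.Icc 1 n).filter fun m =>
    (∀ j, j ≤ 2 * n → (extB g)^[j] (m : ℤ) ≠ -(m : ℤ)) ∧
    ∀ j, j ≤ 2 * n → (m : ℤ) ≤ |(extB g)^[j] (m : ℤ)|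

/-- the signed permutation `w ∘ w'⁻¹`, where `w'` is the sorted (natural) labeling. -/
def gOf (r : Fin n → Fin n → Prop) (w : Fin n → ℤ) : Fin n → ℤ := fun i =>
  w (((univ.filter fun v => sortedB r w v = (i : ℤ) + 1).max).getD i)

/-- type B minimal cycle vertices of a signed labeled forest. -/
def CycBF (r : Fin n → Fin n → Prop) (w : Fin n → ℤ) : Finset (Fin n) :=
  univ.filter fun v => (sortedB r w v).toNat ∈ CycBperm (gOf r w)

/-! ### Signed permutations as words. -/

/-- the inverse of the signed permutation `g`. -/
def ginv (g : Fin n → ℤ) (i : Fin n) : ℤ :=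
  let j := ((univ.filter fun x => |g x| = (i : ℤ) + 1).max).getD i
  if 0 < g j then (j : ℤ) + 1 else -((j : ℤ) + 1)

def invP (σ : Equiv.Perm (Fin n)) : ℕ :=
  (univ.filter fun ij : Fin n × Fin n => ij.1 < ij.2 ∧ σ ij.2 < σ ij.1).card

def invL (g : Fin n → ℤ) : ℕ :=
  (univ.filter fun ij : Fin n × Fin n => ij.1 < ij.2 ∧ g ij.2 < g ij.1).card

def n2L (g : Fin n → ℤ) : ℕ :=
  (univ.filter fun ij : Fin n × Fin n => ij.1 < ij.2 ∧ g ij.1 + g ij.2 < 0).card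

/-- one step of Straight Selection Sort for signed permutations (placing value `i+1`). -/
def sorStepP (i : Fin n) (s : (Fin n → ℤ) × ℤ) : (Fin n → ℤ) × ℤ :=
  let g := s.1
  let j := ((univ.filter fun x => |g x| = (i : ℤ) + 1).max).getD i
  let amt : ℤ := if 0 < g j then ((i : ℤ) + 1) - ((j : ℤ) + 1)
                 else ((i : ℤ) + 1) + ((j : ℤ) + 1) - 1
  let g' := if 0 < g j then Function.update (Function.update g j (g i)) i (g j)
            else Function.update (Function.update g j (-(g i))) i (-(g j))
  (g', s.2 + amt)

/-- the sorting index of a signed permutation. -/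
def sorBperm (g : Fin n → ℤ) : ℤ :=
  (((List.finRange n).reverse).foldl (fun s i => sorStepP i s) (g, 0)).2

end

/-!
Every signed permutation of `[n + 1]` arises uniquely by inserting the letter `n + 1` or
`-(n + 1)` at some position `k ∈ {0, …, n}` of a signed permutation of `[n]`. Since this letter
dominates all others in absolute value, the insertion of `n + 1` adds `n - k` inversions and
creates a new right-to-left minimum exactly when `k = n`, while the insertion of `-(n + 1)`
adds `k` inversions, one negative letter and `n` negative pair sums, and leaves `Rlmin_B`
unchanged. Summing over `k` and the sign multiplies the generating function by
`(q^{n+1} + ⋯ + q^{2n+1}) + (q + ⋯ + q^n) + t_{n+1} = [2n+2]_q - 1 + t_{n+1}`.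
-/

variable {n : ℕ}

theorem card_pairs_insertNth {α : Type*} (P : α → α → Prop) [DecidableRel P] (w : Fin n → α)
    (k : Fin (n + 1)) (v : α) :
    #{ij : Fin (n + 1) × Fin (n + 1) |
        ij.1 < ij.2 ∧
          P ((k.insertNth v w : Fin (n + 1) → α) ij.1) ((k.insertNth v w : Fin (n + 1) → α) ij.2)} =
      #{ij : Fin n × Fin n | ij.1 < ij.2 ∧ P (w ij.1) (w ij.2)} +
        #{a | k.succAbove a < k ∧ P (w a) v} + #{a | k < k.succAbove a ∧ P v (w a)} := by
  simp only [card_filter, Fintype.sum_prod_type, Fin.sum_univ_succAbove _ k,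
    Fin.insertNth_apply_same, Fin.insertNth_apply_succAbove, lt_irrefl, false_and, if_false,
    zero_add, Fin.succAbove_lt_succAbove_iff, sum_add_distrib]
  ring

theorem card_succAbove_lt (k : Fin (n + 1)) : #{a : Fin n | k.succAbove a < k} = k := by
  simp_rw [Fin.succAbove_lt_iff_castSucc_lt, Fin.lt_def, Fin.val_castSucc,
    Fin.card_filter_val_lt]
  exact min_eq_right (Nat.lt_succ_iff.mp k.is_lt)

theorem card_lt_succAbove (k : Fin (n + 1)) : #{a : Fin n | k < k.succAbove a} = n - k := by
  have hne : ∀ a : Fin n, k < k.succAbove a ↔ ¬ k.succAbove a < k := fun a =>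
    ⟨fun h => h.not_gt, fun h => lt_of_le_of_ne (not_lt.mp h) (k.succAbove_ne a).symm⟩
  simp only [hne, filter_not, card_sdiff_of_subset (filter_subset _ _), card_univ,
    Fintype.card_fin, card_succAbove_lt]

theorem invL_insertNth (w : Fin n → ℤ) (k : Fin (n + 1)) (v : ℤ) :
    invL (k.insertNth v w) = invL w + #{a | k.succAbove a < k ∧ v < w a} +
      #{a | k < k.succAbove a ∧ w a < v} :=
  card_pairs_insertNth (fun a b => b < a) w k v

theorem n2L_insertNth (w : Fin n → ℤ) (k : Fin (n + 1)) (v : ℤ) :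
    n2L (k.insertNth v w) = n2L w + #{a | k.succAbove a < k ∧ w a + v < 0} +
      #{a | k < k.succAbove a ∧ v + w a < 0} :=
  card_pairs_insertNth (fun a b => a + b < 0) w k v

theorem n1F_insertNth (w : Fin n → ℤ) (k : Fin (n + 1)) (v : ℤ) :
    n1F (k.insertNth v w) = n1F w + if v < 0 then 1 else 0 := by
  simp only [n1F, card_filter, Fin.sum_univ_succAbove _ k, Fin.insertNth_apply_same,
    Fin.insertNth_apply_succAbove]
  ring

def lengthB (w : Fin n → ℤ) : ℕ := invL w + n1F w + n2L w

theorem lengthB_insertNth_of_abs_lt (w : Fin n → ℤ) (k : Fin (n + 1)) {v : ℤ}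
    (hv : ∀ i, |w i| < v) (hv0 : 0 < v) : lengthB (k.insertNth v w) = lengthB w + (n - k) := by
  have hlt : ∀ i, w i < v := fun i => (le_abs_self _).trans_lt (hv i)
  have hpos : ∀ i, ¬ w i + v < 0 ∧ ¬ v + w i < 0 := fun i => by
    have := neg_abs_le (w i); have := hv i; constructor <;> omega
  simp only [lengthB, invL_insertNth, n2L_insertNth, n1F_insertNth, hlt, (hlt _).not_gt,
    hpos, hv0.not_gt, and_true, and_false, filter_false, card_empty, card_lt_succAbove, if_false]
  omega

theorem lengthB_insertNth_neg_of_abs_lt (w : Fin n → ℤ) (k : Fin (n + 1)) {v : ℤ}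
    (hv : ∀ i, |w i| < v) (hv0 : 0 < v) :
    lengthB (k.insertNth (-v) w) = lengthB w + (n + 1 + k) := by
  have hlt : ∀ i, -v < w i := fun i => by have := neg_abs_le (w i); have := hv i; omega
  have hneg : ∀ i, w i + -v < 0 ∧ -v + w i < 0 := fun i => by
    have := le_abs_self (w i); have := hv i; constructor <;> omega
  simp only [lengthB, invL_insertNth, n2L_insertNth, n1F_insertNth, hlt, (hlt _).not_gt,
    hneg, and_true, and_false, filter_false, card_empty, card_lt_succAbove, card_succAbove_lt,
    neg_lt_zero.mpr hv0, if_true]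
  have := k.is_le
  omega

def rlminB (w : Fin n → ℤ) : Finset (Fin n) :=
  {i | 0 < w i ∧ ∀ j, i < j → w i < |w j|}

theorem prod_rlminB_insertNth {M : Type*} [CommMonoid M] (f : ℤ → M) (w : Fin n → ℤ)
    (k : Fin (n + 1)) {v : ℤ} (hv : ∀ i, |w i| < |v|) :
    ∏ j ∈ rlminB (k.insertNth v w), f ((k.insertNth v w : Fin (n + 1) → ℤ) j) =
      (if 0 < v ∧ k = Fin.last n then f v else 1) * ∏ i ∈ rlminB w, f (w i) := by
  have hk : (0 < v ∧ ∀ j, k < j → v < |(k.insertNth v w : Fin (n + 1) → ℤ) j|) ↔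
      0 < v ∧ k = Fin.last n := by
    refine and_congr_right fun hv0 => ⟨fun h => ?_, ?_⟩
    · by_contra hne
      obtain ⟨i, hi⟩ := Fin.exists_succAbove_eq (Ne.symm hne)
      have := h (Fin.last n) (Fin.lt_last_iff_ne_last.mpr hne)
      rw [← hi, Fin.insertNth_apply_succAbove] at this
      have := hv i
      rw [abs_of_pos hv0] at this
      omega
    · rintro rfl j hj
      exact absurd hj (Fin.le_last j).not_gt
  have hsucc : ∀ i, (0 < w i ∧ ∀ j, k.succAbove i < j →
      w i < |(k.insertNth v w : Fin (n + 1) → ℤ) j|) ↔ 0 < w i ∧ ∀ j, i < j → w i < |w j| := by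
    intro i
    simp only [Fin.forall_iff_succAbove k, Fin.insertNth_apply_same,
      Fin.insertNth_apply_succAbove, Fin.succAbove_lt_succAbove_iff]
    exact and_congr_right fun _ =>
      and_iff_right_of_imp fun _ _ => (le_abs_self _).trans_lt (hv i)
  simp only [rlminB, prod_filter, Fin.prod_univ_succAbove _ k, Fin.insertNth_apply_same,
    Fin.insertNth_apply_succAbove, hk, hsucc]

def weightB {R : Type*} [CommRing R] (q : R) (t : ℕ → R) (w : Fin n → ℤ) : R :=
  q ^ lengthB w * ∏ i ∈ rlminB w, t (w i).toNat

section Weight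

variable {R : Type*} [CommRing R] (q : R) (t : ℕ → R) (w : Fin n → ℤ) (k : Fin (n + 1))

theorem weightB_insertNth_of_abs_lt {v : ℤ} (hv : ∀ i, |w i| < v) (hv0 : 0 < v) :
    weightB q t (k.insertNth v w) =
      weightB q t w * (q ^ (n - k) * if k = Fin.last n then t v.toNat else 1) := by
  rw [weightB, weightB, lengthB_insertNth_of_abs_lt w k hv hv0,
    prod_rlminB_insertNth (fun x => t x.toNat) w k (by simpa [abs_of_pos hv0] using hv)]
  simp only [hv0, true_and, pow_add]
  ring

theorem weightB_insertNth_neg_of_abs_lt {v : ℤ} (hv : ∀ i, |w i| < v) (hv0 : 0 < v) :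
    weightB q t (k.insertNth (-v) w) = weightB q t w * q ^ (n + 1 + k) := by
  rw [weightB, weightB, lengthB_insertNth_neg_of_abs_lt w k hv hv0,
    prod_rlminB_insertNth (fun x => t x.toNat) w k (by simpa [abs_of_pos hv0] using hv)]
  simp only [neg_pos, hv0.not_gt, false_and, if_false, one_mul, pow_add]
  ring

end Weight

theorem sum_insertion_factors {R : Type*} [CommRing R] (q : R) (t : ℕ → R) (m : ℕ) :
    ∑ k : Fin (m + 1),
        (q ^ (m + 1 + k) + q ^ (m - k) * if k = Fin.last m then t (m + 1) else 1) =
      qInt q (2 * (m + 1)) - 1 + t (m + 1) := by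
  have hlow : ∑ k : Fin m, q ^ (m - k) = ∑ i ∈ range m, q ^ (i + 1) := by
    rw [Fin.sum_univ_eq_sum_range (fun k => q ^ (m - k)), ← sum_range_reflect]
    exact sum_congr rfl fun i hi => by rw [mem_range] at hi; congr 1; omega
  have hqInt : qInt q (2 * (m + 1)) =
      1 + ∑ i ∈ range m, q ^ (i + 1) + ∑ i ∈ range (m + 1), q ^ (m + 1 + i) := by
    rw [qInt, two_mul, sum_range_add, sum_range_succ', pow_zero, add_comm _ 1]
  rw [sum_add_distrib, Fin.sum_univ_castSucc (fun k : Fin (m + 1) => q ^ (m - k) * _)]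
  simp only [Fin.val_castSucc, (Fin.castSucc_lt_last _).ne, if_false, mul_one, Fin.val_last,
    Nat.sub_self, pow_zero, one_mul, if_true, hlow, hqInt,
    Fin.sum_univ_eq_sum_range (fun k => q ^ (m + 1 + k))]
  ring

/-- Insert the new largest value `n + 1` at position `k` of the one-line notation of `σ`. -/
def insertPerm (k : Fin (n + 1)) (σ : Equiv.Perm (Fin n)) : Equiv.Perm (Fin (n + 1)) :=
  ((finSuccEquiv' k).trans (Equiv.optionCongr σ)).trans (finSuccEquiv' (Fin.last n)).symm

@[simp]
theorem insertPerm_apply_self (k : Fin (n + 1)) (σ : Equiv.Perm (Fin n)) :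
    insertPerm k σ k = Fin.last n := by
  simp [insertPerm, finSuccEquiv'_at, finSuccEquiv'_symm_none]

@[simp]
theorem insertPerm_apply_succAbove (k : Fin (n + 1)) (σ : Equiv.Perm (Fin n)) (i : Fin n) :
    insertPerm k σ (k.succAbove i) = (σ i).castSucc := by
  simp [insertPerm, finSuccEquiv'_succAbove, finSuccEquiv'_symm_some]

def insertSigned (x : (Equiv.Perm (Fin n) × (Fin n → Bool)) × Fin (n + 1) × Bool) :
    Equiv.Perm (Fin (n + 1)) × (Fin (n + 1) → Bool) :=
  (insertPerm x.2.1 x.1.1, x.2.1.insertNth x.2.2 x.1.2)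

theorem insertSigned_injective : Function.Injective (insertSigned (n := n)) := by
  rintro ⟨⟨σ, ε⟩, k, s⟩ ⟨⟨σ', ε'⟩, k', s'⟩ h
  simp only [insertSigned, Prod.mk.injEq] at h
  obtain ⟨hperm, hsign⟩ := h
  obtain rfl : k = k' := (insertPerm k σ).injective <| by
    rw [insertPerm_apply_self, hperm, insertPerm_apply_self]
  obtain rfl : σ = σ' := Equiv.ext fun i => Fin.castSucc_injective _ <| by
    rw [← insertPerm_apply_succAbove k, ← insertPerm_apply_succAbove k, hperm]
  obtain ⟨rfl, rfl⟩ := Fin.insertNth_injective2 hsign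
  rfl

theorem insertSigned_bijective : Function.Bijective (insertSigned (n := n)) := by
  refine (Fintype.bijective_iff_injective_and_card _).mpr ⟨insertSigned_injective, ?_⟩
  simp only [Fintype.card_prod, Fintype.card_perm, Fintype.card_fun, Fintype.card_bool,
    Fintype.card_fin, Nat.factorial_succ, pow_succ]
  ring

theorem wVal_insertSigned (p : Equiv.Perm (Fin n) × (Fin n → Bool)) (k : Fin (n + 1))
    (s : Bool) :
    wVal (insertSigned (p, k, s)) =
      k.insertNth (if s then -((n : ℤ) + 1) else (n : ℤ) + 1) (wVal p) := by
  ext j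
  induction j using Fin.succAboveCases k with
  | x => cases s <;> simp [wVal, insertSigned]
  | p i => simp [wVal, insertSigned]

theorem abs_wVal_lt (p : Equiv.Perm (Fin n) × (Fin n → Bool)) (i : Fin n) :
    |wVal p i| < n + 1 := by
  have := (p.1 i).is_lt
  unfold wVal
  cases p.2 i <;> simp only [Bool.false_eq_true, if_true, if_false] <;> rw [abs_lt] <;> omega

theorem sum_weightB_wVal_eq_prod {R : Type*} [CommRing R] (q : R) (t : ℕ → R) (n : ℕ) :
    ∑ p : Equiv.Perm (Fin n) × (Fin n → Bool), weightB q t (wVal p) =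
      ∏ i ∈ range n, (qInt q (2 * (i + 1)) - 1 + t (i + 1)) := by
  induction n with
  | zero => simp [weightB, lengthB, rlminB, invL, n1F, n2L]
  | succ n ih =>
    have hv0 : (0 : ℤ) < n + 1 := by positivity
    rw [prod_range_succ, ← ih, sum_mul, ← insertSigned_bijective.sum_comp]
    simp only [Fintype.sum_prod_type]
    refine sum_congr rfl fun σ _ => sum_congr rfl fun ε _ => ?_
    simp only [wVal_insertSigned, Fintype.sum_bool, if_true, Bool.false_eq_true, if_false,
      weightB_insertNth_neg_of_abs_lt q t _ _ (abs_wVal_lt _) hv0,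
      weightB_insertNth_of_abs_lt q t _ _ (abs_wVal_lt _) hv0, ← mul_add, ← mul_sum,
      Int.toNat_natCast_add_one, sum_insertion_factors]

theorem stmt13_general (n : ℕ) (R : Type*) [CommRing R] (q : R) (t : ℕ → R) :
    ∑ p : Equiv.Perm (Fin n) × (Fin n → Bool),
        q ^ (invL (wVal p) + n1F (wVal p) + n2L (wVal p)) *
          ∏ i ∈ Finset.univ.filter
              (fun i : Fin n => 0 < wVal p i ∧ ∀ j, i < j → wVal p i < |wVal p j|),
            t (wVal p i).toNat
      = ∏ i ∈ Finset.range n, (qInt q (2 * (i + 1)) - 1 + t (i + 1)) :=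
  sum_weightB_wVal_eq_prod q t n

/-- Joint distribution of `(ℓ_B, Rlmin_B)` over the hyperoctahedral group `B_n`. -/
theorem stmt13 (n : ℕ) (hn : 1 ≤ n) (R : Type*) [CommRing R] (q : R) (t : ℕ → R) :
    ∑ p : Equiv.Perm (Fin n) × (Fin n → Bool),
        q ^ (invL (wVal p) + n1F (wVal p) + n2L (wVal p)) *
          ∏ i ∈ Finset.univ.filter
              (fun i : Fin n => 0 < wVal p i ∧ ∀ j, i < j → wVal p i < |wVal p j|),
            t (wVal p i).toNat
      = ∏ i ∈ Finset.range n, (qInt q (2 * (i + 1)) - 1 + t (i + 1)) :=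
  stmt13_general n R q t
end

section
/- Let F be a linear tree of size n, w a signed labeling of F, and σ = w(v_1)···w(v_n) ∈ B_n. Then sor_B(F,w) = sor_B(σ^{-1}). -/
open Finset

open scoped Classical

noncomputable section

variable {n : ℕ}

/-!
On the chain the forest algorithm is straight selection sort run on the inverse. Suppose
`v_{i+1}, …, v_n` already carry the labels `i + 1, …, n`. The step placing `i` finds the vertex
`v_j` with `|w(v_j)| = i`, where `j ≤ i`, and takes `u = v_i`; the labels of `v_1, …, v_i` are
already standard, so it adds `i - w(v_i) - χ(w(v_i) < 0)` and composes `w` on the right with the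
signed transposition of `i` and `j`. That composes `w⁻¹` on the left with the same
transposition, i.e. swaps the entries `±i` and `±j` of `w⁻¹`, which stand at positions
`|w(v_i)|` and `i`: this is the step of selection sort on `w⁻¹` placing `i`, and it adds the same
amount. So the two runs stay in lockstep, the permutation always being the inverse of the current
labeling. (Below, positions are `0`-based: vertex `v_i` is `i - 1 : Fin n`.)
-/

lemma Finset.max_getD_of_isGreatest {α : Type*} [LinearOrder α] {s : Finset α} {a : α}
    (h : IsGreatest (s : Set α) a) (d : α) : s.max.getD d = a := by
  rw [le_antisymm (Finset.max_le fun b hb => WithBot.coe_le_coe.mpr (h.2 hb)) (Finset.le_max h.1)]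
  rfl

lemma Equiv.Perm.card_filter_apply_lt (q : Equiv.Perm (Fin n)) (k : Fin n) :
    #{y | q y < k} = k := by
  rw [← Fin.card_Iio k]
  exact Finset.card_equiv q (by simp)

def IsSigning (w : Fin n → ℤ) (q : Equiv.Perm (Fin n)) : Prop := ∀ x, |w x| = (q x : ℤ) + 1

/-- `w` composed with the signed transposition sending `i` to `±v` and `v` to `±i`, with the sign
chosen so that position `i` becomes positive. -/
def signedSwap (w : Fin n → ℤ) (i v : Fin n) : Fin n → ℤ :=
  if 0 < w v then Function.update (Function.update w i (w v)) v (w i)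
  else Function.update (Function.update w i (-(w v))) v (-(w i))

def sorAmount (w : Fin n → ℤ) (i : Fin n) : ℤ :=
  (i : ℤ) + 1 - w i - if w i < 0 then 1 else 0

section signedSwap

variable (w : Fin n → ℤ) (i v : Fin n)

lemma signedSwap_apply_left : signedSwap w i v i = |w v| := by
  unfold signedSwap
  rcases eq_or_ne v i with rfl | hvi
  · split_ifs with h <;> simp [abs_of_pos, abs_of_nonpos (not_lt.mp h), h]
  · split_ifs with h <;>
      simp [Function.update_of_ne hvi.symm, abs_of_pos, abs_of_nonpos (not_lt.mp h), h]

lemma signedSwap_apply_right :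
    signedSwap w i v v = if 0 < w v then w i else -(w i) := by
  unfold signedSwap
  split_ifs <;> simp

lemma signedSwap_apply_of_ne {x : Fin n} (hxi : x ≠ i) (hxv : x ≠ v) :
    signedSwap w i v x = w x := by
  unfold signedSwap
  split_ifs <;> simp [Function.update_of_ne hxi, Function.update_of_ne hxv]

lemma signedSwap_def' :
    signedSwap w i v =
      if 0 < w v then Function.update (Function.update w v (w i)) i (w v)
      else Function.update (Function.update w v (-(w i))) i (-(w v)) := by
  rcases eq_or_ne i v with rfl | hiv
  · rfl
  · unfold signedSwap
    split_ifs <;> exact Function.update_comm hiv _ _ _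

end signedSwap

namespace IsSigning

variable {w : Fin n → ℤ} {q : Equiv.Perm (Fin n)}

lemma sign_mul_abs (hq : IsSigning w q) (x : Fin n) :
    (if w x < 0 then -1 else 1) * ((q x : ℤ) + 1) = w x := by
  rw [← hq x]
  split_ifs with h
  · rw [abs_of_neg h]; ring
  · rw [abs_of_nonneg (not_lt.mp h)]; ring

lemma filter_abs_eq (hq : IsSigning w q) (i : Fin n) :
    (univ.filter fun x => |w x| = (i : ℤ) + 1) = {q.symm i} := by
  ext x
  simp only [mem_filter, mem_univ, true_and, mem_singleton, hq x, Equiv.eq_symm_apply]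
  omega

lemma getD_max_filter_abs_eq (hq : IsSigning w q) (i d : Fin n) :
    ((univ.filter fun x => |w x| = (i : ℤ) + 1).max).getD d = q.symm i := by
  rw [hq.filter_abs_eq]
  rfl

lemma ginv_apply (hq : IsSigning w q) (x : Fin n) :
    ginv w x = if 0 < w (q.symm x) then (q.symm x : ℤ) + 1 else -((q.symm x : ℤ) + 1) := by
  simp only [ginv, hq.getD_max_filter_abs_eq]

lemma inv (hq : IsSigning w q) : IsSigning (ginv w) q.symm := by
  intro x
  rw [hq.ginv_apply x, apply_ite abs, abs_neg, ite_self, abs_of_pos (by positivity)]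

lemma swap (hq : IsSigning w q) (i v : Fin n) :
    IsSigning (signedSwap w i v) (q * Equiv.swap i v) := by
  intro x
  rcases eq_or_ne x i with rfl | hxi
  · rw [signedSwap_apply_left, hq v, Equiv.Perm.mul_apply, Equiv.swap_apply_left,
      abs_of_pos (by positivity)]
  rcases eq_or_ne x v with rfl | hxv
  · rw [signedSwap_apply_right, Equiv.Perm.mul_apply, Equiv.swap_apply_right, ← hq i]
    split_ifs <;> simp
  · rw [signedSwap_apply_of_ne w i v hxi hxv, Equiv.Perm.mul_apply,
      Equiv.swap_apply_of_ne_of_ne hxi hxv, hq x]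

lemma eq_or_eq_neg (hq : IsSigning w q) (x : Fin n) :
    w x = (q x : ℤ) + 1 ∨ w x = -((q x : ℤ) + 1) :=
  (abs_eq (by positivity)).mp (hq x)

lemma ginv_signedSwap (hq : IsSigning w q) (i v : Fin n) :
    ginv (signedSwap w i v) = signedSwap (ginv w) (q v) (q i) := by
  funext x
  have hsymm : (q * Equiv.swap i v).symm x = Equiv.swap i v (q.symm x) := rfl
  rw [(hq.swap i v).ginv_apply, hsymm]
  rcases eq_or_ne x (q v) with rfl | hxv
  · rw [Equiv.symm_apply_apply, Equiv.swap_apply_right, signedSwap_apply_left,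
      signedSwap_apply_left, hq.inv (q i), hq v, Equiv.symm_apply_apply]
    exact if_pos (by positivity)
  rcases eq_or_ne x (q i) with rfl | hxi
  · rw [Equiv.symm_apply_apply, Equiv.swap_apply_left, signedSwap_apply_right,
      signedSwap_apply_right, hq.ginv_apply, hq.ginv_apply, Equiv.symm_apply_apply,
      Equiv.symm_apply_apply]
    have := hq.eq_or_eq_neg i
    have := hq.eq_or_eq_neg v
    split_ifs <;> omega
  · have h1 : q.symm x ≠ i := fun h => hxi (by rw [← h, Equiv.apply_symm_apply])
    have h2 : q.symm x ≠ v := fun h => hxv (by rw [← h, Equiv.apply_symm_apply])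
    rw [Equiv.swap_apply_of_ne_of_ne h1 h2, signedSwap_apply_of_ne _ _ _ hxv hxi,
      signedSwap_apply_of_ne _ _ _ h1 h2, hq.ginv_apply]

lemma sorStepP_ginv (hq : IsSigning w q) (i : Fin n) (t : ℤ) :
    sorStepP i (ginv w, t) = (ginv (signedSwap w i (q.symm i)), t + sorAmount w i) := by
  simp only [sorStepP]
  rw [hq.inv.getD_max_filter_abs_eq, Equiv.symm_symm, hq.ginv_signedSwap, Equiv.apply_symm_apply,
    ← signedSwap_def', hq.ginv_apply, Equiv.symm_apply_apply, sorAmount]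
  rcases hq.eq_or_eq_neg i with h | h <;> rw [h] <;> simp only [Prod.mk.injEq, true_and] <;>
    split_ifs <;> omega

section chain

variable {i : Fin n}

lemma apply_eq_self_of_lt (hq : IsSigning w q)
    (hfix : ∀ x, i < x → w x = (x : ℤ) + 1) {x : Fin n} (hx : i < x) : q x = x := by
  have := hq x
  rw [hfix x hx, abs_of_pos (by positivity)] at this
  exact Fin.ext (by omega)

lemma apply_le_iff (hq : IsSigning w q) (hfix : ∀ x, i < x → w x = (x : ℤ) + 1)
    (y : Fin n) : q y ≤ i ↔ y ≤ i := by
  constructor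
  · intro h
    by_contra! hy
    rw [hq.apply_eq_self_of_lt hfix hy] at h
    exact absurd h (not_le.mpr hy)
  · intro h
    by_contra! hy
    have := hq.apply_eq_self_of_lt hfix hy
    rw [q.injective this] at hy
    exact absurd h (not_le.mpr hy)

lemma symm_apply_le (hq : IsSigning w q) (hfix : ∀ x, i < x → w x = (x : ℤ) + 1) :
    q.symm i ≤ i :=
  (hq.apply_le_iff hfix _).mp (by rw [Equiv.apply_symm_apply])

lemma card_filter_le_abs_lt (hq : IsSigning w q)
    (hfix : ∀ x, i < x → w x = (x : ℤ) + 1) {x : Fin n} (hx : x ≤ i) :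
    #{y | y ≤ i ∧ |w y| < |w x|} = q x := by
  rw [← q.card_filter_apply_lt (q x)]
  congr 1
  ext y
  simp only [mem_filter, mem_univ, true_and, hq y, hq x, add_lt_add_iff_right, Nat.cast_lt,
    Fin.val_fin_lt]
  refine ⟨And.right, fun h => ⟨?_, h⟩⟩
  exact (hq.apply_le_iff hfix y).mp (h.le.trans ((hq.apply_le_iff hfix x).mpr hx))

lemma stdVal_chain (hq : IsSigning w q) (hfix : ∀ x, i < x → w x = (x : ℤ) + 1)
    {x : Fin n} (hx : x ≤ i) : stdVal (· ≤ ·) i w x = w x := by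
  rw [stdVal, filter_congr_decidable, hq.card_filter_le_abs_lt hfix hx, hq.sign_mul_abs]

lemma getD_max_filter_chain (hq : IsSigning w q)
    (hfix : ∀ x, i < x → w x = (x : ℤ) + 1) (d : Fin n) :
    ((univ.filter fun x => q.symm i ≤ x ∧ |w x| ≤ (i : ℤ) + 1).max).getD d = i := by
  refine Finset.max_getD_of_isGreatest ⟨?_, fun x hx => ?_⟩ d
  · simp only [coe_filter, mem_univ, true_and, Set.mem_ofPred_eq, hq i, add_le_add_iff_right,
      Nat.cast_le, Fin.val_fin_le]
    exact ⟨hq.symm_apply_le hfix, (hq.apply_le_iff hfix i).mpr le_rfl⟩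
  · simp only [coe_filter, mem_univ, true_and, Set.mem_ofPred_eq] at hx
    by_contra! hix
    have := hx.2
    rw [hfix x hix, abs_of_pos (by positivity)] at this
    exact absurd hix (not_lt.mpr (Fin.le_def.mpr (by omega)))

lemma sortStepB_chain (hq : IsSigning w q) (hfix : ∀ x, i < x → w x = (x : ℤ) + 1)
    (c : Fin n → ℤ) (t : ℤ) :
    sortStepB (· ≤ ·) i (w, c, t) =
      (signedSwap w i (q.symm i), Function.update c i (sorAmount w i), t + sorAmount w i) := by
  simp only [sortStepB]
  rw [hq.getD_max_filter_abs_eq, hq.getD_max_filter_chain hfix,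
    hq.stdVal_chain hfix (hq.symm_apply_le hfix), hq.stdVal_chain hfix le_rfl, hq,
    Equiv.apply_symm_apply]
  rfl

end chain

end IsSigning

lemma foldl_sorStepP_ginv (l : List (Fin n)) (hl : l.Pairwise (· > ·))
    (hclosed : ∀ x ∈ l, ∀ y < x, y ∈ l) {w : Fin n → ℤ} {q : Equiv.Perm (Fin n)}
    (hq : IsSigning w q) (hfix : ∀ x ∉ l, w x = (x : ℤ) + 1) (c : Fin n → ℤ) (t : ℤ) :
    l.foldl (fun s i => sorStepP i s) (ginv w, t) =
      Prod.map ginv Prod.snd (l.foldl (fun s i => sortStepB (· ≤ ·) i s) (w, c, t)) := by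
  induction l generalizing w q c t with
  | nil => rfl
  | cons i l ih =>
    obtain ⟨hi, hl'⟩ := List.pairwise_cons.mp hl
    have hfix_i : ∀ x, i < x → w x = (x : ℤ) + 1 := fun x hx =>
      hfix x fun hmem => (List.mem_cons.mp hmem).elim (fun h => hx.ne' h)
        fun h => (hi x h).asymm hx
    rw [List.foldl_cons, List.foldl_cons, hq.sortStepB_chain hfix_i, hq.sorStepP_ginv]
    refine ih hl' (fun x hx y hy => ?_) (hq.swap i (q.symm i)) (fun x hx => ?_) _ _
    · exact (List.mem_cons.mp (hclosed x (List.mem_cons_of_mem i hx) y hy)).resolve_left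
        (fun h => (hi x hx).asymm (h ▸ hy))
    · rcases eq_or_ne x i with rfl | hxi
      · rw [signedSwap_apply_left, hq, Equiv.apply_symm_apply]
      rcases eq_or_ne x (q.symm i) with rfl | hxv
      · have hlt := lt_of_le_of_ne (hq.symm_apply_le hfix_i) hxi
        exact absurd ((List.mem_cons.mp (hclosed i List.mem_cons_self _ hlt)).resolve_left hxi) hx
      · rw [signedSwap_apply_of_ne w i _ hxi hxv]
        exact hfix x fun hmem => (List.mem_cons.mp hmem).elim hxi hx

lemma isSigning_wVal (p : Equiv.Perm (Fin n) × (Fin n → Bool)) : IsSigning (wVal p) p.1 := by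
  intro x
  unfold wVal
  split_ifs <;> simp only [neg_one_mul, one_mul, abs_neg] <;> exact abs_of_pos (by positivity)

end

/-- For a linear tree (the chain, i.e. the order `≤` on `Fin n`) with signed labeling `w` and
corresponding signed permutation `σ = w(v_1)⋯w(v_n)`, `sor_B(F,w) = sor_B(σ⁻¹)`. -/
theorem stmt17 (n : ℕ) (p : Equiv.Perm (Fin n) × (Fin n → Bool)) :
    sorBF (fun i j : Fin n => i ≤ j) (wVal p) = sorBperm (ginv (wVal p)) := by
  have hsim := foldl_sorStepP_ginv (List.finRange n).reverse
    (List.pairwise_reverse.mpr (List.pairwise_lt_finRange n))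
    (fun _ _ y _ => List.mem_reverse.mpr (List.mem_finRange y)) (isSigning_wVal p)
    (fun x hx => absurd (List.mem_reverse.mpr (List.mem_finRange x)) hx) (fun _ => 0) 0
  exact (congrArg Prod.snd hsim).symm
end

section
/- Let (m_1,...,m_n) be the M-code of a labeled forest (F,w). Then m_1 + ... + m_n = maj(F,w), and m_i = 0 if and only if v_i is a cyclic bottom-to-top maximum of (F,w). -/
open Finset

open scoped Classical

/-!
Swap the double sum `∑ᵢ mᵢ = #{(u, vᵢ) : u <_F vᵢ, w(u) lies on the cyclic interval from w(vᵢ) to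
w(pᵢ)}` and fix `u`. Along the path from `u` to its root the intervals of consecutive vertices
concatenate to a walk from `w(p_u)` up to `n+1` that wraps around once per descent, so it passes
`w(u)` exactly once for each descent among `u` and its ancestors. Summing over `u` gives
`∑_{v ∈ Des} h_v`.
-/

section MCode

variable {n : ℕ} {r : Fin n → Fin n → Prop}

noncomputable def ancestors (r : Fin n → Fin n → Prop) (v : Fin n) : Finset (Fin n) :=
  univ.filter fun u => strictR r v u

@[simp]
lemma mem_ancestors {v u : Fin n} : u ∈ ancestors r v ↔ strictR r v u := by
  simp [ancestors]

lemma self_notMem_ancestors (v : Fin n) : v ∉ ancestors r v :=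
  fun h => (mem_ancestors.mp h).2 rfl

lemma insert_self_ancestors [Std.Refl r] (v : Fin n) :
    insert v (ancestors r v) = univ.filter fun u => r v u := by
  ext u
  by_cases huv : u = v
  · subst huv; simp [Std.Refl.refl]
  · simp [strictR, huv, Ne.symm huv]

lemma parentW_of_ancestors_eq_empty (w : Equiv.Perm (Fin n)) {v : Fin n}
    (h : ancestors r v = ∅) : parentW r w v = n + 1 :=
  dif_neg (Finset.not_nonempty_iff_eq_empty.mpr h)

lemma parentW_of_ancestors_nonempty (w : Equiv.Perm (Fin n)) {v : Fin n}
    (h : (ancestors r v).Nonempty) : parentW r w v = (w ((ancestors r v).min' h) : ℕ) + 1 :=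
  dif_pos h

lemma val_add_one_ne (w : Equiv.Perm (Fin n)) {u v : Fin n} (h : u ≠ v) :
    (w u : ℕ) + 1 ≠ (w v : ℕ) + 1 := by
  simpa [Fin.val_inj] using h

lemma IsForest.lt_of_strictR (hF : IsForest r) {u v : Fin n} (h : strictR r u v) : u < v :=
  lt_of_le_of_ne (hF.2.2 u v h.1) h.2

lemma IsForest.strictR_trans (hF : IsForest r) {u v x : Fin n} (huv : strictR r u v)
    (hvx : strictR r v x) : strictR r u x :=
  ⟨hF.1.trans u v x huv.1 hvx.1, by
    rintro rfl; exact huv.2 (hF.1.antisymm u v huv.1 hvx.1)⟩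

/-- The ancestors of `v` form a chain, so the one of least index is the parent. -/
lemma IsForest.ancestors_eq_insert (hF : IsForest r) {v : Fin n} (h : (ancestors r v).Nonempty) :
    ancestors r v = insert ((ancestors r v).min' h) (ancestors r ((ancestors r v).min' h)) := by
  set p := (ancestors r v).min' h
  have hvp : strictR r v p := mem_ancestors.mp (Finset.min'_mem _ h)
  ext x
  simp only [mem_ancestors, Finset.mem_insert]
  constructor
  · intro hvx
    by_cases hxp : x = p
    · exact Or.inl hxp
    · refine Or.inr ⟨(hF.2.1 v x p hvx.1 hvp.1).resolve_left fun hrxp => hxp ?_, Ne.symm hxp⟩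
      exact le_antisymm (hF.2.2 x p hrxp) (Finset.min'_le _ x (mem_ancestors.mpr hvx))
  · rintro (rfl | hpx)
    · exact hvp
    · exact hF.strictR_trans hvp hpx

/-- The condition of the M-code: `x` lies on the cyclic interval of `{1, …, n+1}` running upwards
from `a` to `b`. -/
def CycBetween (a b x : ℕ) : Prop :=
  if a < b then a ≤ x ∧ x ≤ b else ¬(b ≤ x ∧ x ≤ a)

/-- `[b < a]` records whether the cyclic walk from `a` up to `b` wraps around; this identity makes
the count along a root path telescope. -/
lemma ite_cycBetween_add {a b x : ℕ} (hab : a ≠ b) (ha : x ≠ a) (hb : x ≠ b) :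
    ((if CycBetween a b x then 1 else 0) + if b < x then 1 else 0) =
      (if a < x then 1 else 0) + if b < a then 1 else 0 := by
  by_cases hlt : a < b <;> simp only [CycBetween, hlt, if_true, if_false] <;> split_ifs <;> omega

lemma mcodeF_eq_card (w : Equiv.Perm (Fin n)) (i : Fin n) :
    mcodeF r w i = #{u | strictR r u i ∧ CycBetween (w i + 1) (parentW r w i) (w u + 1)} := by
  unfold mcodeF CycBetween
  split_ifs <;> rfl

lemma mem_cbtmaxF_iff (w : Equiv.Perm (Fin n)) (i : Fin n) :
    i ∈ CbtmaxF r w ↔ ∀ u, strictR r u i → ¬CycBetween (w i + 1) (parentW r w i) (w u + 1) := by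
  unfold CbtmaxF CycBetween
  split_ifs <;> simp_all

/-- Telescoping `ite_cycBetween_add` along the path from `v` to its root. -/
lemma sum_cycBetween_insert_ancestors (hF : IsForest r) (w : Equiv.Perm (Fin n)) {u v : Fin n}
    (huv : strictR r u v) :
    ∑ i ∈ insert v (ancestors r v), (if CycBetween (w i + 1) (parentW r w i) (w u + 1) then 1 else 0)
      = (if (w v : ℕ) + 1 < w u + 1 then 1 else 0) +
          ∑ i ∈ insert v (ancestors r v), if parentW r w i < w i + 1 then 1 else 0 := by
  induction v using WellFoundedGT.induction with
  | _ v IH =>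
  rw [Finset.sum_insert (self_notMem_ancestors v), Finset.sum_insert (self_notMem_ancestors v)]
  rcases (ancestors r v).eq_empty_or_nonempty with hroot | hne
  · have hpar := parentW_of_ancestors_eq_empty w hroot
    have hstep := ite_cycBetween_add (a := w v + 1) (b := parentW r w v) (x := w u + 1)
      (by rw [hpar]; omega) (val_add_one_ne w huv.2) (by rw [hpar]; omega)
    rw [hroot, hpar] at *
    simp only [Finset.sum_empty]
    split_ifs at hstep ⊢ <;> omega
  · rw [hF.ancestors_eq_insert hne]
    set p := (ancestors r v).min' hne
    have hvp : strictR r v p := mem_ancestors.mp (Finset.min'_mem _ hne)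
    have hpar : parentW r w v = (w p : ℕ) + 1 := parentW_of_ancestors_nonempty w hne
    have hstep := ite_cycBetween_add (a := w v + 1) (b := parentW r w v) (x := w u + 1)
      (by rw [hpar]; exact val_add_one_ne w hvp.2) (val_add_one_ne w huv.2)
      (by rw [hpar]; exact val_add_one_ne w (hF.strictR_trans huv hvp).2)
    have hIH := IH p (hF.lt_of_strictR hvp) (hF.strictR_trans huv hvp)
    rw [hpar] at hstep
    rw [hIH, hpar]
    omega

lemma sum_ancestors_cycBetween (hF : IsForest r) (w : Equiv.Perm (Fin n)) (u : Fin n) :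
    ∑ i ∈ ancestors r u, (if CycBetween (w i + 1) (parentW r w i) (w u + 1) then 1 else 0)
      = ∑ i ∈ insert u (ancestors r u), if parentW r w i < w i + 1 then 1 else 0 := by
  rw [Finset.sum_insert (self_notMem_ancestors u)]
  rcases (ancestors r u).eq_empty_or_nonempty with hroot | hne
  · have hpar := parentW_of_ancestors_eq_empty w hroot
    have hwu := (w u).isLt
    simp only [hroot, hpar, Finset.sum_empty]
    split_ifs <;> omega
  · have hpar := parentW_of_ancestors_nonempty w hne
    have hup : strictR r u ((ancestors r u).min' hne) := mem_ancestors.mp (Finset.min'_mem _ hne)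
    rw [hF.ancestors_eq_insert hne, sum_cycBetween_insert_ancestors hF w hup, hpar]

lemma majF_eq_sum_sum (w : Equiv.Perm (Fin n)) :
    majF r w = ∑ u, ∑ i ∈ univ.filter (fun i => r u i),
      if parentW r w i < w i + 1 then 1 else 0 := by
  simp only [majF, hook, Finset.card_filter, Finset.sum_filter]
  rw [Finset.sum_comm]
  refine Finset.sum_congr rfl fun i _ => ?_
  split_ifs <;> simp [*]

end MCode

/-- The M-code sums to the major index, and its zeros are exactly the cyclic
bottom-to-top maxima. -/
theorem stmt18 (n : ℕ) (r : Fin n → Fin n → Prop) (hF : IsForest r)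
    (w : Equiv.Perm (Fin n)) :
    (∑ i : Fin n, mcodeF r w i = majF r w) ∧
      ∀ i : Fin n, (mcodeF r w i = 0 ↔ i ∈ CbtmaxF r w) := by
  have := hF.1
  refine ⟨?_, fun i => ?_⟩
  · calc ∑ i, mcodeF r w i
        = ∑ u, ∑ i ∈ ancestors r u,
            if CycBetween (w i + 1) (parentW r w i) (w u + 1) then 1 else 0 := by
          simp only [mcodeF_eq_card, Finset.card_filter, ancestors, Finset.sum_filter, ite_and]
          exact Finset.sum_comm
      _ = majF r w := by
          simp only [sum_ancestors_cycBetween hF, insert_self_ancestors, majF_eq_sum_sum]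
  · rw [mcodeF_eq_card, mem_cbtmaxF_iff, Finset.card_eq_zero, Finset.filter_eq_empty_iff]
    simp only [Finset.mem_univ, true_implies, not_and]
end
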